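/- Generalized Ertel invariant: let u be a C¹ velocity field, η a C² scalar field with Dη/Dt = 0, ρ a positive C¹ scalar satisfying ∂ρ/∂t + div(ρu) = 0, and L a C¹ vector field satisfying the Helmholtz equation DL/Dt + L div u − (∂u/∂x)L = 0. Then D/Dt ( (∇η)ᵀ L / ρ ) = 0. -/

import Mathlib

open Matrix

noncomputable section

abbrev V3 := Fin 3 → ℝ

/-- spatial partial derivative in direction `i` -/
def pd (i : Fin 3) (f : V3 → ℝ) (x : V3) : ℝ := fderiv ℝ f x (Pi.single i 1)

/-- gradient of a scalar field -/
def grad (f : V3 → ℝ) (x : V3) : V3 := fun i => pd i f x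

/-- divergence of a vector field -/
def vdiv (v : V3 → V3) (x : V3) : ℝ := ∑ i, pd i (fun y => v y i) x

/-- spatial Jacobian matrix ∂v/∂x -/
def jac (v : V3 → V3) (x : V3) : Matrix (Fin 3) (Fin 3) ℝ := fun i j => pd j (fun y => v y i) x

/-- curl of a vector field -/
def curl (v : V3 → V3) (x : V3) : V3 :=
  ![pd 1 (fun y => v y 2) x - pd 2 (fun y => v y 1) x,
    pd 2 (fun y => v y 0) x - pd 0 (fun y => v y 2) x,
    pd 0 (fun y => v y 1) x - pd 1 (fun y => v y 0) x]

/-- cross product in ℝ³ -/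
def cross (a b : V3) : V3 :=
  ![a 1 * b 2 - a 2 * b 1, a 2 * b 0 - a 0 * b 2, a 0 * b 1 - a 1 * b 0]

/-- partial time derivative of a scalar field -/
def pt (f : ℝ → V3 → ℝ) (t : ℝ) (x : V3) : ℝ := deriv (fun s => f s x) t

/-- partial time derivative of a vector field -/
def ptV (f : ℝ → V3 → V3) (t : ℝ) (x : V3) : V3 := fun i => pt (fun t x => f t x i) t x

/-- material derivative D/Dt = ∂/∂t + uᵀ∇ of a scalar field -/
def Dmat (u : ℝ → V3 → V3) (f : ℝ → V3 → ℝ) (t : ℝ) (x : V3) : ℝ :=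
  pt f t x + ∑ i, u t x i * pd i (f t) x

/-- material derivative of a vector field, componentwise -/
def DmatV (u f : ℝ → V3 → V3) (t : ℝ) (x : V3) : V3 :=
  fun i => Dmat u (fun t x => f t x i) t x

/-!
The material derivative `Dmat u f t x` is the derivative of `uncurry f` at `(t, x)` in the
spacetime direction `(1, u t x)`, so it obeys the Leibniz rules. Differentiating the transport
identity `d(uncurry η)(1, u) = 0` and using the symmetry of the second derivative gives
`D(∇η) = -(∂u/∂x)ᵀ ∇η`; together with the Helmholtz equation `DL = (∂u/∂x) L - (div u) L` the
two Jacobian terms cancel, so `D(∇η ⬝ L) = -(div u) (∇η ⬝ L)`. The continuity equation gives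
`D(1/ρ) = (div u)/ρ`, and the two rates cancel in the product `(∇η ⬝ L) ρ⁻¹`.
-/

open Function

theorem fderiv_apply_eq_dotProduct_grad (g : V3 → ℝ) (x v : V3) :
    fderiv ℝ g x v = v ⬝ᵥ grad g x := by
  conv_lhs => rw [pi_eq_sum_univ' v]
  simp [map_sum, dotProduct, grad, pd]

theorem fderiv_apply_eq_jac_mulVec {v : V3 → V3} {x : V3} (hv : DifferentiableAt ℝ v x)
    (w : V3) : fderiv ℝ v x w = jac v x *ᵥ w := by
  ext j
  rw [mulVec, dotProduct_comm]
  exact (congrArg (· w) (fderiv_apply hv j)).symm.trans (fderiv_apply_eq_dotProduct_grad _ x w)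

theorem vdiv_smul {g : V3 → ℝ} {v : V3 → V3} {x : V3} (hg : DifferentiableAt ℝ g x)
    (hv : DifferentiableAt ℝ v x) :
    vdiv (fun y => g y • v y) x = grad g x ⬝ᵥ v x + g x * vdiv v x := by
  simp only [vdiv, dotProduct, Finset.mul_sum, ← Finset.sum_add_distrib]
  refine Finset.sum_congr rfl fun i _ => ?_
  simp only [pd, Pi.smul_apply, smul_eq_mul]
  rw [fderiv_fun_mul hg (differentiableAt_pi.1 hv i)]
  simp only [_root_.add_apply, _root_.smul_apply, smul_eq_mul, grad, pd]
  ring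

theorem fderiv_fderiv_apply_of_fderiv_apply_eq_zero {E F : Type*}
    [NormedAddCommGroup E] [NormedSpace ℝ E] [NormedAddCommGroup F] [NormedSpace ℝ F]
    {f : E → F} {w : E → E} {p : E} (hf : ContDiff ℝ 2 f) (hw : DifferentiableAt ℝ w p)
    (h : ∀ q, fderiv ℝ f q (w q) = 0) (v : E) :
    fderiv ℝ (fun q => fderiv ℝ f q v) p (w p) = -fderiv ℝ f p (fderiv ℝ w p v) := by
  have hf' : DifferentiableAt ℝ (fderiv ℝ f) p :=
    (hf.fderiv_right (m := 1) le_rfl).differentiable one_ne_zero p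
  have hsymm : IsSymmSndFDerivAt ℝ f p := hf.contDiffAt.isSymmSndFDerivAt (by simp)
  have hzero : fderiv ℝ (fun q => fderiv ℝ f q (w q)) p v = 0 := by
    simp [funext h]
  rw [fderiv_clm_apply hf' hw] at hzero
  rw [fderiv_clm_apply hf' (differentiableAt_const v)]
  simp only [_root_.add_apply, ContinuousLinearMap.coe_comp, Function.comp_apply,
    ContinuousLinearMap.flip_apply, fderiv_const_apply, _root_.zero_apply, map_zero,
    zero_add] at hzero ⊢
  rw [hsymm.eq]
  exact eq_neg_of_add_eq_zero_right hzero

section MaterialDerivative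

variable {E : Type*} [NormedAddCommGroup E] [NormedSpace ℝ E] {t : ℝ} {x : V3}

theorem DifferentiableAt.of_uncurry {F : ℝ → V3 → E}
    (hF : DifferentiableAt ℝ (uncurry F) (t, x)) : DifferentiableAt ℝ (F t) x :=
  hF.comp x (hasFDerivAt_prodMk_right t x).differentiableAt

theorem fderiv_uncurry_apply_zero_left {F : ℝ → V3 → E}
    (hF : DifferentiableAt ℝ (uncurry F) (t, x)) (v : V3) :
    fderiv ℝ (uncurry F) (t, x) (0, v) = fderiv ℝ (F t) x v := by
  have h : HasFDerivAt (F t) ((fderiv ℝ (uncurry F) (t, x)).comp (.inr ℝ ℝ V3)) x :=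
    hF.hasFDerivAt.comp x (hasFDerivAt_prodMk_right t x)
  rw [h.fderiv]
  rfl

variable {f g : ℝ → V3 → ℝ}

theorem fderiv_uncurry_apply_one_zero (hf : DifferentiableAt ℝ (uncurry f) (t, x)) :
    fderiv ℝ (uncurry f) (t, x) (1, 0) = pt f t x := by
  have h := hf.hasFDerivAt.comp t (hasFDerivAt_prodMk_left (𝕜 := ℝ) t x)
  exact h.hasDerivAt.deriv.symm

variable (u : ℝ → V3 → V3)

theorem Dmat_eq_fderiv (hf : DifferentiableAt ℝ (uncurry f) (t, x)) :
    Dmat u f t x = fderiv ℝ (uncurry f) (t, x) (1, u t x) := by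
  have : ((1 : ℝ), u t x) = (1, 0) + (0, u t x) := by simp
  rw [this, map_add, fderiv_uncurry_apply_one_zero hf, fderiv_uncurry_apply_zero_left hf,
    fderiv_apply_eq_dotProduct_grad]
  rfl

theorem Dmat_eq_of_hasFDerivAt {f' : ℝ × V3 →L[ℝ] ℝ}
    (hf : HasFDerivAt (uncurry f) f' (t, x)) :
    Dmat u f t x = f' (1, u t x) := by
  rw [Dmat_eq_fderiv u hf.differentiableAt, hf.fderiv]

theorem Dmat_mul (hf : DifferentiableAt ℝ (uncurry f) (t, x))
    (hg : DifferentiableAt ℝ (uncurry g) (t, x)) :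
    Dmat u (fun s y => f s y * g s y) t x = Dmat u f t x * g t x + f t x * Dmat u g t x := by
  have h : HasFDerivAt (uncurry fun s y => f s y * g s y) _ (t, x) :=
    hf.hasFDerivAt.mul hg.hasFDerivAt
  rw [Dmat_eq_of_hasFDerivAt u h, Dmat_eq_fderiv u hf, Dmat_eq_fderiv u hg]
  simp only [_root_.add_apply, _root_.smul_apply, smul_eq_mul]
  change f t x * _ + g t x * _ = _
  ring

theorem Dmat_inv (hg : DifferentiableAt ℝ (uncurry g) (t, x)) (hg0 : g t x ≠ 0) :
    Dmat u (fun s y => (g s y)⁻¹) t x = -Dmat u g t x / g t x ^ 2 := by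
  have h : HasFDerivAt (uncurry fun s y => (g s y)⁻¹) _ (t, x) :=
    (hasFDerivAt_inv (𝕜 := ℝ) hg0).comp (t, x) hg.hasFDerivAt
  rw [Dmat_eq_of_hasFDerivAt u h, Dmat_eq_fderiv u hg]
  simp [div_eq_mul_inv, mul_comm]

theorem Dmat_sum {ι : Type*} (S : Finset ι) {f : ι → ℝ → V3 → ℝ}
    (hf : ∀ i ∈ S, DifferentiableAt ℝ (uncurry (f i)) (t, x)) :
    Dmat u (fun s y => ∑ i ∈ S, f i s y) t x = ∑ i ∈ S, Dmat u (f i) t x := by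
  have h : HasFDerivAt (uncurry fun s y => ∑ i ∈ S, f i s y) _ (t, x) :=
    HasFDerivAt.fun_sum fun i hi => (hf i hi).hasFDerivAt
  rw [Dmat_eq_of_hasFDerivAt u h, _root_.sum_apply]
  exact Finset.sum_congr rfl fun i hi => (Dmat_eq_fderiv u (hf i hi)).symm

variable {F G : ℝ → V3 → V3}

theorem DifferentiableAt.uncurry_dotProduct (hF : DifferentiableAt ℝ (uncurry F) (t, x))
    (hG : DifferentiableAt ℝ (uncurry G) (t, x)) :
    DifferentiableAt ℝ (uncurry fun s y => F s y ⬝ᵥ G s y) (t, x) :=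
  DifferentiableAt.fun_sum (u := Finset.univ) fun i _ =>
    (differentiableAt_pi.1 hF i).fun_mul (differentiableAt_pi.1 hG i)

theorem Dmat_dotProduct (hF : DifferentiableAt ℝ (uncurry F) (t, x))
    (hG : DifferentiableAt ℝ (uncurry G) (t, x)) :
    Dmat u (fun s y => F s y ⬝ᵥ G s y) t x
      = DmatV u F t x ⬝ᵥ G t x + F t x ⬝ᵥ DmatV u G t x := by
  have hFi : ∀ i, DifferentiableAt ℝ (uncurry fun s y => F s y i) (t, x) :=
    differentiableAt_pi.1 hF
  have hGi : ∀ i, DifferentiableAt ℝ (uncurry fun s y => G s y i) (t, x) :=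
    differentiableAt_pi.1 hG
  have hFGi : ∀ i, DifferentiableAt ℝ (uncurry fun s y => F s y i * G s y i) (t, x) :=
    fun i => (hFi i).fun_mul (hGi i)
  simp only [dotProduct]
  rw [Dmat_sum u _ fun i _ => hFGi i, ← Finset.sum_add_distrib]
  exact Finset.sum_congr rfl fun i _ => Dmat_mul u (hFi i) (hGi i)

variable {η ρ : ℝ → V3 → ℝ} {L : ℝ → V3 → V3}

theorem uncurry_pd_eq (hη : Differentiable ℝ (uncurry η)) (i : Fin 3) :
    uncurry (fun s y => pd i (η s) y) = fun q => fderiv ℝ (uncurry η) q (0, Pi.single i 1) := by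
  funext ⟨s, y⟩
  exact (fderiv_uncurry_apply_zero_left (hη (s, y)) _).symm

theorem differentiable_uncurry_pd (hη : ContDiff ℝ 2 (uncurry η)) (i : Fin 3) :
    Differentiable ℝ (uncurry fun s y => pd i (η s) y) := by
  rw [uncurry_pd_eq (hη.differentiable two_ne_zero)]
  exact ((hη.fderiv_right (m := 1) le_rfl).differentiable one_ne_zero).clm_apply
    (differentiable_const _)

theorem differentiable_uncurry_grad (hη : ContDiff ℝ 2 (uncurry η)) :
    Differentiable ℝ (uncurry fun s => grad (η s)) :=
  differentiable_pi.2 (differentiable_uncurry_pd hη)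

theorem DmatV_grad_of_Dmat_eq_zero (hu : Differentiable ℝ (uncurry u))
    (hη : ContDiff ℝ 2 (uncurry η)) (hη0 : ∀ t x, Dmat u η t x = 0) :
    DmatV u (fun s => grad (η s)) t x = -((jac (u t) x)ᵀ *ᵥ grad (η t) x) := by
  have hd := hη.differentiable two_ne_zero
  have hw : HasFDerivAt (fun q => ((1 : ℝ), uncurry u q))
      ((0 : ℝ × V3 →L[ℝ] ℝ).prod (fderiv ℝ (uncurry u) (t, x))) (t, x) :=
    (hasFDerivAt_const _ _).prodMk (hu _).hasFDerivAt
  have htransport : ∀ q, fderiv ℝ (uncurry η) q (1, uncurry u q) = 0 := fun q =>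
    (Dmat_eq_fderiv u (hd q)).symm.trans (hη0 q.1 q.2)
  ext i
  change Dmat u (fun s y => pd i (η s) y) t x = _
  rw [Dmat_eq_fderiv u (differentiable_uncurry_pd hη i (t, x)), uncurry_pd_eq hd]
  refine (fderiv_fderiv_apply_of_fderiv_apply_eq_zero hη hw.differentiableAt htransport
    (0, Pi.single i 1)).trans ?_
  rw [hw.fderiv]
  simp only [ContinuousLinearMap.prod_apply, _root_.zero_apply, Pi.neg_apply, neg_inj]
  rw [fderiv_uncurry_apply_zero_left (hu _), fderiv_uncurry_apply_zero_left (hd _),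
    fderiv_apply_eq_jac_mulVec (hu _).of_uncurry, fderiv_apply_eq_dotProduct_grad,
    mulVec_single_one]
  rfl

theorem Dmat_grad_dotProduct_of_helmholtz (hu : Differentiable ℝ (uncurry u))
    (hη : ContDiff ℝ 2 (uncurry η)) (hη0 : ∀ t x, Dmat u η t x = 0)
    (hL : DifferentiableAt ℝ (uncurry L) (t, x))
    (hLeq : DmatV u L t x + vdiv (u t) x • L t x - jac (u t) x *ᵥ L t x = 0) :
    Dmat u (fun s y => grad (η s) y ⬝ᵥ L s y) t x
      = -(vdiv (u t) x * (grad (η t) x ⬝ᵥ L t x)) := by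
  have hDL : DmatV u L t x = jac (u t) x *ᵥ L t x - vdiv (u t) x • L t x :=
    eq_sub_of_add_eq (sub_eq_zero.1 hLeq)
  rw [Dmat_dotProduct u (differentiable_uncurry_grad hη _) hL,
    DmatV_grad_of_Dmat_eq_zero u hu hη hη0, hDL, mulVec_transpose, dotProduct_sub,
    dotProduct_smul, dotProduct_mulVec, neg_dotProduct, smul_eq_mul]
  ring

theorem Dmat_eq_neg_mul_vdiv_of_continuity (hρ : DifferentiableAt ℝ (ρ t) x)
    (hu : DifferentiableAt ℝ (u t) x) (h : pt ρ t x + vdiv (fun y => ρ t y • u t y) x = 0) :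
    Dmat u ρ t x = -(ρ t x * vdiv (u t) x) := by
  rw [vdiv_smul hρ hu] at h
  change pt ρ t x + u t x ⬝ᵥ grad (ρ t) x = _
  rw [dotProduct_comm]
  linarith

theorem Dmat_inv_of_continuity (hρ : DifferentiableAt ℝ (uncurry ρ) (t, x))
    (hu : DifferentiableAt ℝ (u t) x) (hρ0 : ρ t x ≠ 0)
    (h : pt ρ t x + vdiv (fun y => ρ t y • u t y) x = 0) :
    Dmat u (fun s y => (ρ s y)⁻¹) t x = vdiv (u t) x / ρ t x := by
  rw [Dmat_inv u hρ hρ0, Dmat_eq_neg_mul_vdiv_of_continuity u hρ.of_uncurry hu h]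
  field_simp

end MaterialDerivative

/-- Generalized Ertel invariant: D/Dt ((∇η)ᵀ L / ρ) = 0. -/
theorem generalized_ertel_invariant (u L : ℝ → V3 → V3) (η ρ : ℝ → V3 → ℝ)
    (hu : ContDiff ℝ 1 (Function.uncurry u))
    (hL : ContDiff ℝ 1 (Function.uncurry L))
    (hη : ContDiff ℝ 2 (Function.uncurry η))
    (hρ : ContDiff ℝ 1 (Function.uncurry ρ))
    (hρpos : ∀ t x, 0 < ρ t x)
    (hηtransport : ∀ t x, Dmat u η t x = 0)
    (hcontinuity : ∀ t x, pt ρ t x + vdiv (fun y => ρ t y • u t y) x = 0)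
    (hLeq : ∀ t x, DmatV u L t x + vdiv (u t) x • L t x - jac (u t) x *ᵥ L t x = 0)
    (t : ℝ) (x : V3) :
    Dmat u (fun s y => (grad (η s) y ⬝ᵥ L s y) / ρ s y) t x = 0 := by
  have hud := hu.differentiable one_ne_zero
  have hLd := hL.differentiable one_ne_zero (t, x)
  have hρd := hρ.differentiable one_ne_zero (t, x)
  have hρ0 := (hρpos t x).ne'
  have hρinv : DifferentiableAt ℝ (uncurry fun s y => (ρ s y)⁻¹) (t, x) := hρd.inv hρ0
  simp only [div_eq_mul_inv]
  rw [Dmat_mul u ((differentiable_uncurry_grad hη _).uncurry_dotProduct hLd) hρinv,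
    Dmat_grad_dotProduct_of_helmholtz u hud hη hηtransport hLd (hLeq t x),
    Dmat_inv_of_continuity u hρd (hud _).of_uncurry hρ0 (hcontinuity t x)]
  field_simp
  ring
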